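/- The strong resolving graph of the n×m grid (n,m ≥ 2) has exactly two edges: {x_{1,1}, x_{n,m}} and {x_{1,m}, x_{n,1}}; consequently the strong metric dimension of the grid is 2. -/

import Mathlib

open SimpleGraph

/-- `y` is maximally distant from `x` in `G`: no neighbor of `y` is farther from `x` than `y`. -/
def MaxDistantFrom {V : Type*} (G : SimpleGraph V) (y x : V) : Prop :=
  ∀ z, G.Adj y z → G.dist z x ≤ G.dist y x

/-- `u` and `v` are mutually maximally distant in `G`. -/
def MutuallyMaxDistant {V : Type*} (G : SimpleGraph V) (u v : V) : Prop :=
  MaxDistantFrom G u v ∧ MaxDistantFrom G v u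

/-- The strong resolving graph of `G`: edges are the mutually maximally distant pairs. -/
def srGraph {V : Type*} (G : SimpleGraph V) : SimpleGraph V where
  Adj u v := u ≠ v ∧ MutuallyMaxDistant G u v
  symm := ⟨fun u v h => ⟨h.1.symm, h.2.2, h.2.1⟩⟩
  loopless := ⟨fun u h => h.1 rfl⟩

/-- `w` strongly resolves `u` and `v`: `v` lies on a shortest `w`–`u` path, or
`u` lies on a shortest `w`–`v` path. -/
def StronglyResolves {V : Type*} (G : SimpleGraph V) (w u v : V) : Prop :=
  G.dist w v + G.dist v u = G.dist w u ∨ G.dist w u + G.dist u v = G.dist w v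

/-- `R` is a strong resolving set for `G`. -/
def StrongResolvingSet {V : Type*} (G : SimpleGraph V) (R : Set V) : Prop :=
  ∀ u v : V, u ≠ v → ∃ w ∈ R, StronglyResolves G w u v
/-- The `n × m` grid graph: vertices `(i, j)` with `0 ≤ i < n`, `0 ≤ j < m`,
adjacent iff at Manhattan distance `1`. -/
def gridGraph (n m : ℕ) : SimpleGraph (Fin n × Fin m) :=
  SimpleGraph.fromRel (fun a b => Nat.dist a.1.1 b.1.1 + Nat.dist a.2.1 b.2.1 = 1)


/-!
The grid is the box product of two paths, so distances add up coordinatewise and a vertex is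
maximally distant from another exactly when each coordinate is. In a path only the two endpoints
are mutually maximally distant, which leaves the two diagonals of opposite corners as the edges
of the strong resolving graph. A vertex strongly resolving a mutually maximally distant pair is
one of the pair, so every strong resolving set meets both diagonals; conversely the two corners
of one side resolve every pair.
-/

namespace SimpleGraph

variable {V W : Type*} {G : SimpleGraph V} {H : SimpleGraph W}

lemma Preconnected.exists_adj_dist_add_one_eq (hG : G.Preconnected) {v w : V} (hne : v ≠ w) :
    ∃ z, G.Adj v z ∧ G.dist z w + 1 = G.dist v w := by
  obtain ⟨p, hp⟩ := (hG v w).exists_walk_length_eq_dist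
  cases p with
  | nil => exact absurd rfl hne
  | cons hadj q =>
    refine ⟨_, hadj, le_antisymm ?_ ?_⟩
    · rw [← hp, Walk.length_cons]
      exact Nat.add_le_add_right (dist_le q) 1
    · have := hadj.reachable.dist_triangle_left w
      rw [dist_eq_one_iff_adj.2 hadj] at this
      omega

/-- Stepping from `v` one edge back towards `w` would move away from `u`. -/
lemma MaxDistantFrom.eq_of_dist_add_dist_eq (hG : G.Preconnected) {u v w : V}
    (h : MaxDistantFrom G v u) (hw : G.dist w v + G.dist v u = G.dist w u) : w = v := by
  by_contra hne
  obtain ⟨z, hvz, hz⟩ := hG.exists_adj_dist_add_one_eq (Ne.symm hne)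
  have hwu : G.dist w u ≤ G.dist w z + G.dist z u := (hG w z).dist_triangle_left u
  have hzu := h z hvz
  rw [dist_comm (u := w) (v := v)] at hw
  rw [dist_comm (u := w) (v := z)] at hwu
  omega

lemma MutuallyMaxDistant.eq_or_eq_of_stronglyResolves (hG : G.Preconnected) {u v w : V}
    (h : MutuallyMaxDistant G u v) (hw : StronglyResolves G w u v) : w = u ∨ w = v :=
  hw.elim (fun hv => Or.inr (h.2.eq_of_dist_add_dist_eq hG hv))
    (fun hu => Or.inl (h.1.eq_of_dist_add_dist_eq hG hu))

lemma StrongResolvingSet.mem_or_mem_of_srGraph_adj (hG : G.Preconnected) {R : Set V}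
    (hR : StrongResolvingSet G R) {u v : V} (h : (srGraph G).Adj u v) : u ∈ R ∨ v ∈ R := by
  obtain ⟨w, hwR, hw⟩ := hR u v h.1
  rcases h.2.eq_or_eq_of_stronglyResolves hG hw with rfl | rfl
  exacts [Or.inl hwR, Or.inr hwR]

lemma StrongResolvingSet.two_le_card (hG : G.Preconnected) {R : Finset V}
    (hR : StrongResolvingSet G R) {a b c d : V} (hab : (srGraph G).Adj a b)
    (hcd : (srGraph G).Adj c d) (hac : a ≠ c) (had : a ≠ d) (hbc : b ≠ c) (hbd : b ≠ d) :
    2 ≤ R.card := by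
  obtain ⟨w₁, hw₁R, hw₁⟩ : ∃ w ∈ R, w = a ∨ w = b := by
    rcases hR.mem_or_mem_of_srGraph_adj hG hab with h | h
    exacts [⟨a, h, Or.inl rfl⟩, ⟨b, h, Or.inr rfl⟩]
  obtain ⟨w₂, hw₂R, hw₂⟩ : ∃ w ∈ R, w = c ∨ w = d := by
    rcases hR.mem_or_mem_of_srGraph_adj hG hcd with h | h
    exacts [⟨c, h, Or.inl rfl⟩, ⟨d, h, Or.inr rfl⟩]
  refine Finset.one_lt_card.2 ⟨w₁, hw₁R, w₂, hw₂R, ?_⟩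
  rcases hw₁ with rfl | rfl <;> rcases hw₂ with rfl | rfl <;> assumption

lemma Preconnected.dist_boxProd (hG : G.Preconnected) (hH : H.Preconnected) (x y : V × W) :
    (G □ H).dist x y = G.dist x.1 y.1 + H.dist x.2 y.2 := by
  rw [dist, edist_boxProd, ← (hG _ _).coe_dist_eq_edist, ← (hH _ _).coe_dist_eq_edist]
  exact ENat.toNat_natCast _

lemma maxDistantFrom_boxProd_iff (hG : G.Preconnected) (hH : H.Preconnected) {x y : V × W} :
    MaxDistantFrom (G □ H) y x ↔ MaxDistantFrom G y.1 x.1 ∧ MaxDistantFrom H y.2 x.2 := by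
  simp only [MaxDistantFrom, Prod.forall, boxProd_adj, hG.dist_boxProd hH]
  constructor
  · intro h
    exact ⟨fun a ha => by simpa using h a y.2 (Or.inl ⟨ha, rfl⟩),
      fun b hb => by simpa using h y.1 b (Or.inr ⟨hb, rfl⟩)⟩
  · rintro ⟨h₁, h₂⟩ a b (⟨ha, rfl⟩ | ⟨hb, rfl⟩)
    · exact Nat.add_le_add_right (h₁ a ha) _
    · exact Nat.add_le_add_left (h₂ b hb) _

lemma mutuallyMaxDistant_boxProd_iff (hG : G.Preconnected) (hH : H.Preconnected)
    {x y : V × W} :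
    MutuallyMaxDistant (G □ H) x y ↔
      MutuallyMaxDistant G x.1 y.1 ∧ MutuallyMaxDistant H x.2 y.2 := by
  simp only [MutuallyMaxDistant, maxDistantFrom_boxProd_iff hG hH]
  exact and_and_and_comm

variable {n : ℕ}

lemma Walk.dist_le_length_of_pathGraph {i j : Fin n} (p : (pathGraph n).Walk i j) :
    Nat.dist i j ≤ p.length := by
  induction p with
  | nil => simp
  | cons h _ ih =>
    rw [pathGraph_adj] at h
    simp only [Walk.length_cons, Nat.dist] at *
    omega

lemma pathGraph_dist_le (i j : Fin n) : (pathGraph n).dist i j ≤ Nat.dist i j := by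
  wlog hij : i ≤ j generalizing i j
  · rw [dist_comm, Nat.dist_comm]
    exact this j i (le_of_not_ge hij)
  obtain ⟨k, hk⟩ := Nat.exists_eq_add_of_le (Fin.le_def.1 hij)
  rw [Nat.dist_eq_sub_of_le hij, hk, Nat.add_sub_cancel_left]
  induction k generalizing j with
  | zero => simp [Fin.ext hk.symm]
  | succ k ih =>
    let j' : Fin n := ⟨i + k, by omega⟩
    have hadj : (pathGraph n).Adj j' j := pathGraph_adj.2 (Or.inl (by simp [j']; omega))
    calc (pathGraph n).dist i j
        ≤ (pathGraph n).dist i j' + (pathGraph n).dist j' j :=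
          (pathGraph_preconnected n i j').dist_triangle_left j
      _ ≤ k + 1 := by
          rw [dist_eq_one_iff_adj.2 hadj]
          exact Nat.add_le_add_right (ih j' (Fin.le_def.2 (by simp [j'])) rfl) 1

lemma pathGraph_dist (i j : Fin n) : (pathGraph n).dist i j = Nat.dist i j := by
  obtain ⟨p, hp⟩ := (pathGraph_preconnected n i j).exists_walk_length_eq_dist
  exact le_antisymm (pathGraph_dist_le i j) (hp ▸ p.dist_le_length_of_pathGraph)

lemma maxDistantFrom_pathGraph_iff {x y : Fin n} :
    MaxDistantFrom (pathGraph n) y x ↔ (x ≤ y → y.1 + 1 = n) ∧ (y ≤ x → y.1 = 0) := by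
  simp only [MaxDistantFrom, pathGraph_adj, pathGraph_dist, Nat.dist, Fin.le_def]
  have hy := y.2
  constructor
  · intro h
    refine ⟨fun hxy => ?_, fun hyx => ?_⟩
    · by_contra hne
      have := h ⟨y + 1, by omega⟩ (Or.inl rfl)
      simp only at this
      omega
    · by_contra hne
      have := h ⟨y - 1, by omega⟩ (Or.inr (by simp only; omega))
      simp only at this
      omega
  · rintro ⟨h₁, h₂⟩ z hz
    omega

lemma mutuallyMaxDistant_pathGraph_iff {x y : Fin n} :
    MutuallyMaxDistant (pathGraph n) x y ↔ x.1 = 0 ∧ y.1 = n - 1 ∨ x.1 = n - 1 ∧ y.1 = 0 := by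
  simp only [MutuallyMaxDistant, maxDistantFrom_pathGraph_iff, Fin.le_def]
  have := x.2
  have := y.2
  omega

end SimpleGraph

open SimpleGraph

variable {n m : ℕ}

lemma gridGraph_eq_boxProd (n m : ℕ) : gridGraph n m = pathGraph n □ pathGraph m := by
  ext a b
  simp only [gridGraph, fromRel_adj, boxProd_adj, pathGraph_adj, Nat.dist, ne_eq,
    Prod.ext_iff, Fin.ext_iff]
  omega

lemma gridGraph_preconnected (n m : ℕ) : (gridGraph n m).Preconnected :=
  gridGraph_eq_boxProd n m ▸ (pathGraph_preconnected n).boxProd (pathGraph_preconnected m)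

lemma gridGraph_dist (a b : Fin n × Fin m) :
    (gridGraph n m).dist a b = Nat.dist a.1 b.1 + Nat.dist a.2 b.2 := by
  rw [gridGraph_eq_boxProd, (pathGraph_preconnected n).dist_boxProd (pathGraph_preconnected m),
    pathGraph_dist, pathGraph_dist]

lemma mutuallyMaxDistant_gridGraph_iff {a b : Fin n × Fin m} :
    MutuallyMaxDistant (gridGraph n m) a b ↔
      (a.1.1 = 0 ∧ b.1.1 = n - 1 ∨ a.1.1 = n - 1 ∧ b.1.1 = 0) ∧
      (a.2.1 = 0 ∧ b.2.1 = m - 1 ∨ a.2.1 = m - 1 ∧ b.2.1 = 0) := by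
  rw [gridGraph_eq_boxProd,
    mutuallyMaxDistant_boxProd_iff (pathGraph_preconnected n) (pathGraph_preconnected m),
    mutuallyMaxDistant_pathGraph_iff, mutuallyMaxDistant_pathGraph_iff]

lemma srGraph_gridGraph_adj_iff (hn : 2 ≤ n) {a b : Fin n × Fin m} :
    (srGraph (gridGraph n m)).Adj a b ↔
      (a.1.1 = 0 ∧ b.1.1 = n - 1 ∨ a.1.1 = n - 1 ∧ b.1.1 = 0) ∧
      (a.2.1 = 0 ∧ b.2.1 = m - 1 ∨ a.2.1 = m - 1 ∧ b.2.1 = 0) := by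
  rw [← mutuallyMaxDistant_gridGraph_iff]
  refine ⟨fun h => h.2, fun h => ⟨fun hab => ?_, h⟩⟩
  subst hab
  have := mutuallyMaxDistant_gridGraph_iff.1 h
  omega

/-- The corner `(0, 0)` resolves the pairs whose coordinates are ordered the same way,
the corner `(0, m - 1)` those ordered oppositely. -/
lemma strongResolvingSet_gridGraph_corners (hn : 0 < n) (hm : 0 < m) :
    StrongResolvingSet (gridGraph n m) {(⟨0, hn⟩, ⟨0, hm⟩), (⟨0, hn⟩, ⟨m - 1, by omega⟩)} := by
  intro u v _
  have := u.2.2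
  have := v.2.2
  by_cases hsame : (u.1 ≤ v.1 ↔ u.2 ≤ v.2)
  · refine ⟨_, Set.mem_insert _ _, ?_⟩
    simp only [StronglyResolves, gridGraph_dist, Nat.dist, Fin.le_def] at hsame ⊢
    omega
  · refine ⟨_, Set.mem_insert_of_mem _ rfl, ?_⟩
    simp only [StronglyResolves, gridGraph_dist, Nat.dist, Fin.le_def] at hsame ⊢
    omega

/-- The strong resolving graph of the `n × m` grid (`n, m ≥ 2`) has exactly the two edges
`{x_{1,1}, x_{n,m}}` and `{x_{1,m}, x_{n,1}}`; consequently the strong metric dimension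
of the grid is `2`. -/
theorem grid_srGraph_and_sdim {n m : ℕ} (hn : 2 ≤ n) (hm : 2 ≤ m) :
    (∀ a b : Fin n × Fin m, (srGraph (gridGraph n m)).Adj a b ↔
      (({a, b} : Set (Fin n × Fin m)) =
          {((⟨0, by omega⟩ : Fin n), (⟨0, by omega⟩ : Fin m)),
           ((⟨n - 1, by omega⟩ : Fin n), (⟨m - 1, by omega⟩ : Fin m))} ∨
       ({a, b} : Set (Fin n × Fin m)) =
          {((⟨0, by omega⟩ : Fin n), (⟨m - 1, by omega⟩ : Fin m)),
           ((⟨n - 1, by omega⟩ : Fin n), (⟨0, by omega⟩ : Fin m))})) ∧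
    IsLeast {c : ℕ | ∃ R : Finset (Fin n × Fin m),
      StrongResolvingSet (gridGraph n m) ↑R ∧ R.card = c} 2 := by
  have hadj (a b : Fin n × Fin m) := srGraph_gridGraph_adj_iff (m := m) hn (a := a) (b := b)
  refine ⟨fun a b => ?_, ⟨{(⟨0, by omega⟩, ⟨0, by omega⟩), (⟨0, by omega⟩, ⟨m - 1, by omega⟩)},
    ?_, ?_⟩, ?_⟩
  · rw [hadj, Set.pair_eq_pair_iff, Set.pair_eq_pair_iff]
    simp only [Prod.ext_iff, Fin.ext_iff]
    omega
  · rw [Finset.coe_pair]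
    exact strongResolvingSet_gridGraph_corners (by omega) (by omega)
  · rw [Finset.card_pair]
    simp only [ne_eq, Prod.ext_iff, Fin.ext_iff]
    omega
  · rintro _ ⟨R, hR, rfl⟩
    refine hR.two_le_card (gridGraph_preconnected n m)
      (a := (⟨0, by omega⟩, ⟨0, by omega⟩)) (b := (⟨n - 1, by omega⟩, ⟨m - 1, by omega⟩))
      (c := (⟨0, by omega⟩, ⟨m - 1, by omega⟩)) (d := (⟨n - 1, by omega⟩, ⟨0, by omega⟩))
      ?_ ?_ ?_ ?_ ?_ ?_ <;>
      simp only [hadj, ne_eq, Prod.ext_iff, Fin.ext_iff, true_and, and_true, true_or, or_true] <;>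
      omega
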